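/- Let β > 0 and c ∈ ℝ with (β/2)c² > 1. Then the equation m = tanh((β/2)·m·c²) has exactly three solutions in (-1,1): m = 0, m = m* and m = -m* for some m* ∈ (0,1). -/

import Mathlib

/-!
Write `a = (β/2) c²`. The map `m ↦ tanh (a m)` has slope `a > 1` at `0` and stays below `1`, so by
the intermediate value theorem it has a fixed point `m* ∈ (0,1)`. Since `tanh` is strictly concave
on `[0, ∞)` and vanishes at `0`, a line through the origin meets its graph at most once on
`(0, ∞)`, so `m*` is the only positive fixed point; `tanh` is odd, so the negative fixed points are
the negatives of the positive ones.
-/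

open Set Filter Topology

namespace Real

theorem hasDerivAt_tanh (x : ℝ) : HasDerivAt tanh (cosh x ^ 2)⁻¹ x := by
  have h := (hasDerivAt_sinh x).div (hasDerivAt_cosh x) (cosh_pos x).ne'
  rw [show cosh x * cosh x - sinh x * sinh x = 1 by nlinarith [cosh_sq_sub_sinh_sq x],
    one_div] at h
  rwa [show tanh = fun x => sinh x / cosh x from funext tanh_eq_sinh_div_cosh]

theorem continuous_tanh : Continuous tanh :=
  continuous_iff_continuousAt.2 fun x => (hasDerivAt_tanh x).continuousAt

theorem strictConcaveOn_tanh : StrictConcaveOn ℝ (Ici 0) tanh := by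
  refine StrictAntiOn.strictConcaveOn_of_deriv (convex_Ici 0) continuous_tanh.continuousOn ?_
  rw [interior_Ici]
  intro x hx y hy hxy
  rw [(hasDerivAt_tanh x).deriv, (hasDerivAt_tanh y).deriv]
  have : cosh x < cosh y := cosh_lt_cosh.2 (by rwa [abs_of_pos hx, abs_of_pos hy])
  gcongr

end Real

theorem StrictConcaveOn.eq_of_apply_eq_mul {𝕜 : Type*} [Field 𝕜] [LinearOrder 𝕜]
    [IsStrictOrderedRing 𝕜] {f : 𝕜 → 𝕜} (hf : StrictConcaveOn 𝕜 (Ici 0) f) (h0 : f 0 = 0)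
    {k x y : 𝕜} (hx : 0 < x) (hy : 0 < y) (hfx : f x = k * x) (hfy : f y = k * y) : x = y := by
  by_contra hne
  wlog hxy : x < y generalizing x y
  · exact this hy hx hfy hfx (Ne.symm hne) ((not_lt.1 hxy).lt_of_ne (Ne.symm hne))
  have := hf.secant_strict_mono self_mem_Ici hx.le hy.le hx.ne' hy.ne' hxy
  simp only [h0, sub_zero, hfx, hfy, mul_div_cancel_right₀ _ hx.ne',
    mul_div_cancel_right₀ _ hy.ne'] at this
  exact lt_irrefl k this

theorem HasDerivAt.eventually_lt_nhdsGT_zero {f : ℝ → ℝ} {f' : ℝ} (hf : HasDerivAt f f' 0)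
    (h0 : f 0 = 0) (hf' : 1 < f') : ∀ᶠ x in 𝓝[>] 0, x < f x := by
  have hslope : ∀ᶠ x in 𝓝[>] 0, 1 < slope f 0 x :=
    ((hasDerivAt_iff_tendsto_slope.1 hf).mono_left (nhdsGT_le_nhdsNE 0)).eventually
      (eventually_gt_nhds hf')
  filter_upwards [hslope, self_mem_nhdsWithin] with x hx (hx0 : 0 < x)
  rwa [slope_def_field, h0, sub_zero, sub_zero, one_lt_div hx0] at hx

theorem exists_mem_Ioo_apply_eq_self {f : ℝ → ℝ} {f' : ℝ} (hc : ContinuousOn f (Icc 0 1))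
    (hd : HasDerivAt f f' 0) (h0 : f 0 = 0) (hf' : 1 < f') (h1 : f 1 < 1) :
    ∃ m ∈ Ioo 0 1, f m = m := by
  obtain ⟨x₀, hx₀f, hx₀⟩ :=
    ((hd.eventually_lt_nhdsGT_zero h0 hf').and (Ioo_mem_nhdsGT one_pos)).exists
  have hc' : ContinuousOn (fun x => f x - x) (Icc x₀ 1) :=
    (hc.mono (Icc_subset_Icc hx₀.1.le le_rfl)).sub continuousOn_id
  obtain ⟨m, hm, hfm⟩ := intermediate_value_Ioo' hx₀.2.le hc'
    (show (0 : ℝ) ∈ Ioo (f 1 - 1) (f x₀ - x₀) from ⟨by linarith, by linarith⟩)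
  exact ⟨m, ⟨hx₀.1.trans hm.1, hm.2⟩, sub_eq_zero.1 hfm⟩

namespace Real

theorem exists_tanh_mul_eq_self {a : ℝ} (ha : 1 < a) : ∃ m ∈ Ioo (0 : ℝ) 1, tanh (a * m) = m := by
  have hd : HasDerivAt (fun m => tanh (a * m)) a 0 := by
    simpa [Function.comp_def] using
      (hasDerivAt_tanh (a * 0)).comp 0 ((hasDerivAt_id 0).const_mul a)
  exact exists_mem_Ioo_apply_eq_self (continuous_tanh.comp (continuous_const_mul a)).continuousOn
    hd (by simp) ha (tanh_lt_one _)

theorem tanh_mul_eq_self_iff {a m m' : ℝ} (ha : 0 < a) (hm' : 0 < m')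
    (hfix : tanh (a * m') = m') : tanh (a * m) = m ↔ m = -m' ∨ m = 0 ∨ m = m' := by
  have eq_of_pos : ∀ {m}, 0 < m → tanh (a * m) = m → m = m' := fun hm hm_fix =>
    mul_left_cancel₀ ha.ne' <| strictConcaveOn_tanh.eq_of_apply_eq_mul tanh_zero (k := a⁻¹)
      (mul_pos ha hm) (mul_pos ha hm') (by rw [hm_fix]; field_simp) (by rw [hfix]; field_simp)
  constructor
  · intro hm
    rcases lt_trichotomy m 0 with hneg | hzero | hpos
    · refine Or.inl (neg_eq_iff_eq_neg.1 (eq_of_pos (neg_pos.2 hneg) ?_))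
      rw [mul_neg, tanh_neg, hm]
    · exact Or.inr (Or.inl hzero)
    · exact Or.inr (Or.inr (eq_of_pos hpos hm))
  · rintro (rfl | rfl | rfl) <;> simp [tanh_neg, hfix]

end Real

theorem supercritical_three_solutions_general (β c : ℝ)
    (hsup : 1 < β / 2 * c ^ 2) :
    ∃ mstar ∈ Ioo (0 : ℝ) 1,
      {m : ℝ | m ∈ Ioo (-1 : ℝ) 1 ∧ m = Real.tanh (β / 2 * m * c ^ 2)}
        = {-mstar, 0, mstar} := by
  obtain ⟨mstar, hmstar, hfix⟩ := Real.exists_tanh_mul_eq_self hsup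
  refine ⟨mstar, hmstar, Set.ext fun m => ?_⟩
  have hbounded : m = Real.tanh (β / 2 * c ^ 2 * m) → m ∈ Ioo (-1 : ℝ) 1 := fun h => by
    rw [mem_Ioo, h]
    exact ⟨Real.neg_one_lt_tanh _, Real.tanh_lt_one _⟩
  rw [mem_ofPred_eq, show β / 2 * m * c ^ 2 = β / 2 * c ^ 2 * m by ring,
    and_iff_right_of_imp hbounded, eq_comm,
    Real.tanh_mul_eq_self_iff (by linarith) hmstar.1 hfix]
  simp only [mem_insert_iff, mem_singleton_iff]

/-- Supercritical case: if `β > 0` and `(β/2) c² > 1`, the self-consistency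
equation `m = tanh((β/2) m c²)` has exactly three solutions in `(-1,1)`:
`m = 0`, `m = m*` and `m = -m*` for some `m* ∈ (0,1)`. -/
theorem supercritical_three_solutions (β c : ℝ) (hβ : 0 < β)
    (hsup : 1 < β / 2 * c ^ 2) :
    ∃ mstar ∈ Ioo (0 : ℝ) 1,
      {m : ℝ | m ∈ Ioo (-1 : ℝ) 1 ∧ m = Real.tanh (β / 2 * m * c ^ 2)}
        = {-mstar, 0, mstar} :=
  supercritical_three_solutions_general β c hsup
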